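/- Abstract form of Lemma 2.2(3) (degeneracy of the limiting penalized second variation): Let E be a real normed vector space, W, P1, P2 : E → ℝ twice continuously Fréchet differentiable, ã₀ > 0 and b ∈ ℝ. Let f : [0,ã₀) → E be continuously differentiable (with one-sided derivative at 0) and twice differentiable on (0,ã₀), and let α, β : [0,ã₀) → ℝ be continuous, differentiable on (0,ã₀), with ã·α'(ã) → 0 as ã → 0⁺. Assume that for every ã ∈ (0,ã₀): P1(f(ã)) = ã², P2(f(ã)) = b, and DW(f(ã)) = α(ã)·DP1(f(ã)) + β(ã)·DP2(f(ã)). Then, with α⁰ := α(0), β⁰ := β(0) and φ := f'(0), one has D²W(f(0))(φ,φ) − α⁰·D²P1(f(0))(φ,φ) − β⁰·D²P2(f(0))(φ,φ) = 0; i.e., the limiting variation φ is a null direction of the second variation of the penalized functional W − α⁰P1 − β⁰P2 at f(0). -/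

import Mathlib

open Set Filter Topology

/-!
Differentiating the Euler–Lagrange relation `DW(f) = α DP1(f) + β DP2(f)` along the curve and
evaluating at `f'` shows that the penalized second variation in the direction `f'(ã)` equals
`α'(ã) DP1(f) f' + β'(ã) DP2(f) f'`. Differentiating the constraints `P1(f) = ã²` and `P2(f) = b`
turns this into `2 ã α'(ã)`, which tends to `0` as `ã → 0⁺`; continuity at `ã = 0` then gives
the claim.
-/

section

variable {E F : Type*} [NormedAddCommGroup E] [NormedSpace ℝ E]
  [NormedAddCommGroup F] [NormedSpace ℝ F]

noncomputable def penalizedSecondVariation (W P1 P2 : E → ℝ) (α β : ℝ) (x v : E) : ℝ :=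
  fderiv ℝ (fderiv ℝ W) x v v - α * fderiv ℝ (fderiv ℝ P1) x v v
    - β * fderiv ℝ (fderiv ℝ P2) x v v

theorem fderiv_apply_eq_of_comp_eventuallyEq {P : E → F} {f : ℝ → E} {g : ℝ → F} {v : E}
    {g' : F} {a : ℝ} (hP : DifferentiableAt ℝ P (f a)) (hf : HasDerivAt f v a)
    (hg : HasDerivAt g g' a) (hPf : P ∘ f =ᶠ[𝓝 a] g) :
    fderiv ℝ P (f a) v = g' :=
  (hP.hasFDerivAt.comp_hasDerivAt a hf).unique (hg.congr_of_eventuallyEq hPf)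

theorem penalizedSecondVariation_eq_of_eulerLagrange {W P1 P2 : E → ℝ} {f : ℝ → E}
    {α β : ℝ → ℝ} {v : E} {α' β' a : ℝ}
    (hW : DifferentiableAt ℝ (fderiv ℝ W) (f a)) (hP1 : DifferentiableAt ℝ (fderiv ℝ P1) (f a))
    (hP2 : DifferentiableAt ℝ (fderiv ℝ P2) (f a))
    (hf : HasDerivAt f v a) (hα : HasDerivAt α α' a) (hβ : HasDerivAt β β' a)
    (hEL : ∀ᶠ x in 𝓝 a,
      fderiv ℝ W (f x) = α x • fderiv ℝ P1 (f x) + β x • fderiv ℝ P2 (f x)) :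
    penalizedSecondVariation W P1 P2 (α a) (β a) (f a) v
      = α' * fderiv ℝ P1 (f a) v + β' * fderiv ℝ P2 (f a) v := by
  have hrhs : HasDerivAt (fun x => α x • fderiv ℝ P1 (f x) + β x • fderiv ℝ P2 (f x))
      ((α a • fderiv ℝ (fderiv ℝ P1) (f a) v + α' • fderiv ℝ P1 (f a))
        + (β a • fderiv ℝ (fderiv ℝ P2) (f a) v + β' • fderiv ℝ P2 (f a))) a :=
    (hα.smul (hP1.hasFDerivAt.comp_hasDerivAt a hf)).add
      (hβ.smul (hP2.hasFDerivAt.comp_hasDerivAt a hf))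
  have hdiff := congrArg (fun L : E →L[ℝ] ℝ => L v)
    (fderiv_apply_eq_of_comp_eventuallyEq hW hf hrhs hEL)
  simp only [add_apply, FunLike.coe_smul, Pi.smul_apply,
    smul_eq_mul] at hdiff
  rw [penalizedSecondVariation, hdiff]
  ring

theorem ContinuousOn.penalizedSecondVariation {X : Type*} [TopologicalSpace X] {s : Set X}
    {W P1 P2 : E → ℝ} (hW : ContDiff ℝ 2 W) (hP1 : ContDiff ℝ 2 P1) (hP2 : ContDiff ℝ 2 P2)
    {f v : X → E} {α β : X → ℝ} (hf : ContinuousOn f s) (hv : ContinuousOn v s)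
    (hα : ContinuousOn α s) (hβ : ContinuousOn β s) :
    ContinuousOn (fun x => penalizedSecondVariation W P1 P2 (α x) (β x) (f x) (v x)) s := by
  have hD2 : ∀ {P : E → ℝ}, ContDiff ℝ 2 P →
      ContinuousOn (fun x => fderiv ℝ (fderiv ℝ P) (f x) (v x) (v x)) s := fun hP =>
    ((((hP.fderiv_right (m := 1) (by norm_num)).continuous_fderiv one_ne_zero).comp_continuousOn
      hf).clm_apply hv).clm_apply hv
  exact ((hD2 hW).sub (hα.mul (hD2 hP1))).sub (hβ.mul (hD2 hP2))

theorem eq_of_continuousWithinAt_Ico_of_eqOn_Ioo {G g : ℝ → ℝ} {c d L : ℝ} (hcd : c < d)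
    (hG : ContinuousWithinAt G (Ico c d) c) (hGg : EqOn G g (Ioo c d))
    (hg : Tendsto g (𝓝[>] c) (𝓝 L)) : G c = L := by
  have : (𝓝[Ioo c d] c).NeBot := left_nhdsWithin_Ioo_neBot hcd
  refine tendsto_nhds_unique (hG.tendsto.mono_left (nhdsWithin_mono c Ioo_subset_Ico_self)) ?_
  exact (hg.mono_left (nhdsWithin_mono c Ioo_subset_Ioi_self)).congr'
    (eventually_of_mem self_mem_nhdsWithin fun x hx => (hGg hx).symm)

end

theorem limiting_penalized_second_variation_degenerate_general
    {E : Type*} [NormedAddCommGroup E] [NormedSpace ℝ E]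
    (W P1 P2 : E → ℝ)
    (hW : ContDiff ℝ 2 W) (hP1 : ContDiff ℝ 2 P1) (hP2 : ContDiff ℝ 2 P2)
    (a₀ : ℝ) (ha₀ : 0 < a₀) (b : ℝ)
    (f f' : ℝ → E) (α β α' β' : ℝ → ℝ)
    (hf : ∀ a ∈ Ico (0:ℝ) a₀, HasDerivWithinAt f (f' a) (Ico (0:ℝ) a₀) a)
    (hf'cont : ContinuousOn f' (Ico (0:ℝ) a₀))
    (hαcont : ContinuousOn α (Ico (0:ℝ) a₀))
    (hβcont : ContinuousOn β (Ico (0:ℝ) a₀))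
    (hα : ∀ a ∈ Ioo (0:ℝ) a₀, HasDerivAt α (α' a) a)
    (hβ : ∀ a ∈ Ioo (0:ℝ) a₀, HasDerivAt β (β' a) a)
    (htend : Filter.Tendsto (fun a => a * α' a) (nhdsWithin 0 (Ioi (0:ℝ))) (nhds 0))
    (hP1f : ∀ a ∈ Ioo (0:ℝ) a₀, P1 (f a) = a ^ 2)
    (hP2f : ∀ a ∈ Ioo (0:ℝ) a₀, P2 (f a) = b)
    (hEL : ∀ a ∈ Ioo (0:ℝ) a₀, fderiv ℝ W (f a)
        = α a • fderiv ℝ P1 (f a) + β a • fderiv ℝ P2 (f a)) :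
    fderiv ℝ (fderiv ℝ W) (f 0) (f' 0) (f' 0)
      - α 0 * (fderiv ℝ (fderiv ℝ P1) (f 0) (f' 0) (f' 0))
      - β 0 * (fderiv ℝ (fderiv ℝ P2) (f 0) (f' 0) (f' 0))
    = 0 := by
  have hD1 : ∀ {P : E → ℝ}, ContDiff ℝ 2 P → Differentiable ℝ (fderiv ℝ P) := fun hP =>
    (hP.fderiv_right (m := 1) (by norm_num)).differentiable one_ne_zero
  have hvar : EqOn (fun a => penalizedSecondVariation W P1 P2 (α a) (β a) (f a) (f' a))
      (fun a => 2 * (a * α' a)) (Ioo 0 a₀) := by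
    intro a ha
    dsimp only
    have hIoo : Ioo 0 a₀ ∈ 𝓝 a := Ioo_mem_nhds ha.1 ha.2
    have hfa : HasDerivAt f (f' a) a := (hf a (Ioo_subset_Ico_self ha)).hasDerivAt
      (Ico_mem_nhds ha.1 ha.2)
    have hDP1 : fderiv ℝ P1 (f a) (f' a) = 2 * a := fderiv_apply_eq_of_comp_eventuallyEq
      (hP1.differentiable two_ne_zero _) hfa (by simpa using hasDerivAt_pow 2 a)
      (eventually_of_mem hIoo hP1f)
    have hDP2 : fderiv ℝ P2 (f a) (f' a) = 0 := fderiv_apply_eq_of_comp_eventuallyEq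
      (hP2.differentiable two_ne_zero _) hfa (hasDerivAt_const a b) (eventually_of_mem hIoo hP2f)
    rw [penalizedSecondVariation_eq_of_eulerLagrange (hD1 hW _) (hD1 hP1 _) (hD1 hP2 _) hfa
      (hα a ha) (hβ a ha) (eventually_of_mem hIoo hEL), hDP1, hDP2]
    ring
  have hcont := ContinuousOn.penalizedSecondVariation hW hP1 hP2
    (fun a ha => (hf a ha).continuousWithinAt) hf'cont hαcont hβcont
  simpa [penalizedSecondVariation] using
    eq_of_continuousWithinAt_Ico_of_eqOn_Ioo ha₀ (hcont 0 ⟨le_rfl, ha₀⟩) hvar (htend.const_mul 2)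

/-- Abstract form of Lemma 2.2(3): degeneracy of the limiting penalized second variation.
Here `a` plays the role of `ã` (the square root of the first conformal coordinate).
The limiting variation `φ = f'(0)` is a null direction of the second variation of the
penalized functional `W − α⁰·P1 − β⁰·P2` at `f(0)`. -/
theorem limiting_penalized_second_variation_degenerate
    {E : Type*} [NormedAddCommGroup E] [NormedSpace ℝ E]
    (W P1 P2 : E → ℝ)
    (hW : ContDiff ℝ 2 W) (hP1 : ContDiff ℝ 2 P1) (hP2 : ContDiff ℝ 2 P2)
    (a₀ : ℝ) (ha₀ : 0 < a₀) (b : ℝ)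
    (f f' f'' : ℝ → E) (α β α' β' : ℝ → ℝ)
    (hf : ∀ a ∈ Ico (0:ℝ) a₀, HasDerivWithinAt f (f' a) (Ico (0:ℝ) a₀) a)
    (hf'cont : ContinuousOn f' (Ico (0:ℝ) a₀))
    (hf'' : ∀ a ∈ Ioo (0:ℝ) a₀, HasDerivAt f' (f'' a) a)
    (hαcont : ContinuousOn α (Ico (0:ℝ) a₀))
    (hβcont : ContinuousOn β (Ico (0:ℝ) a₀))
    (hα : ∀ a ∈ Ioo (0:ℝ) a₀, HasDerivAt α (α' a) a)
    (hβ : ∀ a ∈ Ioo (0:ℝ) a₀, HasDerivAt β (β' a) a)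
    (htend : Filter.Tendsto (fun a => a * α' a) (nhdsWithin 0 (Ioi (0:ℝ))) (nhds 0))
    (hP1f : ∀ a ∈ Ioo (0:ℝ) a₀, P1 (f a) = a ^ 2)
    (hP2f : ∀ a ∈ Ioo (0:ℝ) a₀, P2 (f a) = b)
    (hEL : ∀ a ∈ Ioo (0:ℝ) a₀, fderiv ℝ W (f a)
        = α a • fderiv ℝ P1 (f a) + β a • fderiv ℝ P2 (f a)) :
    fderiv ℝ (fderiv ℝ W) (f 0) (f' 0) (f' 0)
      - α 0 * (fderiv ℝ (fderiv ℝ P1) (f 0) (f' 0) (f' 0))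
      - β 0 * (fderiv ℝ (fderiv ℝ P2) (f 0) (f' 0) (f' 0))
    = 0 :=
  limiting_penalized_second_variation_degenerate_general W P1 P2 hW hP1 hP2 a₀ ha₀ b f f' α β α' β'
    hf hf'cont hαcont hβcont hα hβ htend hP1f hP2f hEL
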